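/- Perron's diagonal relations: if a,b,c,e ∈ ℍ form an oriented-convex cocyclic 4-gon, then both equations hold: (S_ab·S_bc + S_ae·S_ce)·S_ac² = (S_ab·S_ce + S_ae·S_bc)·(S_ab·S_ae + S_bc·S_ce), and (S_ab·S_ae + S_bc·S_ce)·S_be² = (S_ab·S_ce + S_bc·S_ae)·(S_ab·S_bc + S_ae·S_ce). -/
import Mathlib


open Real Finset

noncomputable section

/-- Points of `ℝ³`. -/
abbrev V3 : Type := Fin 3 → ℝ

/-- The pseudo-Euclidean scalar product `⟨x,y⟩ = x₀y₀ − x₁y₁ − x₂y₂`. -/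
def pscal (x y : V3) : ℝ := x 0 * y 0 - x 1 * y 1 - x 2 * y 2

/-- The hyperboloid model `ℍ` of the hyperbolic plane. -/
def Hyp : Set V3 := {x | pscal x x = 1 ∧ 0 < x 0}

/-- Inverse hyperbolic cosine. -/
def arcoshR (x : ℝ) : ℝ := Real.log (x + Real.sqrt (x ^ 2 - 1))

/-- Hyperbolic distance `d(a,b) = arcosh ⟨a,b⟩`. -/
def dH (a b : V3) : ℝ := arcoshR (pscal a b)

/-- Determinant of the 3×3 matrix with columns `a`, `b`, `c`. -/
def det3 (a b c : V3) : ℝ :=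
  a 0 * (b 1 * c 2 - b 2 * c 1) - b 0 * (a 1 * c 2 - a 2 * c 1) + c 0 * (a 1 * b 2 - a 2 * b 1)

/-- `S_ab = sinh(d(a,b)/2)`. -/
def SS (a b : V3) : ℝ := Real.sinh (dH a b / 2)

/-- Signed area of the triangle `a b c`. -/
def triArea (a b c : V3) : ℝ :=
  2 * Real.arctan (det3 a b c / (pscal a b + pscal b c + pscal c a + 1))

/-- Signed area of the `n`-gon with vertices `z 1, …, z n`. -/
def polyArea (n : ℕ) (z : ℕ → V3) : ℝ :=
  ∑ k ∈ Finset.Ico 2 n, triArea (z 1) (z k) (z (k + 1))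

/-- Cyclic successor on `{1, …, n}`. -/
def nxt (n k : ℕ) : ℕ := k % n + 1

/-- Oriented convexity of the `n`-gon `z 1, …, z n`. -/
def OrientedConvex (n : ℕ) (z : ℕ → V3) : Prop :=
  ∀ k ∈ Finset.Icc 1 n, ∀ j ∈ Finset.Icc 1 n,
    j ≠ k → j ≠ nxt n k → 0 < det3 (z k) (z (nxt n k)) (z j)

/-- A set of points lies in a common 2-dimensional linear subspace of `ℝ³`. -/
def Collin (s : Set V3) : Prop :=
  ∃ W : Submodule ℝ V3, Module.finrank ℝ W = 2 ∧ ∀ x ∈ s, x ∈ W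

/-- A set of points lies in a common affine plane of `ℝ³` not containing the origin. -/
def Cocyc (s : Set V3) : Prop :=
  ∃ u : V3, ∃ p : ℝ, u ≠ 0 ∧ p ≠ 0 ∧ ∀ x ∈ s, pscal u x = p

lemma pscal_comm (a b : V3) : pscal a b = pscal b a := by simp only [pscal]; ring

lemma pscal_ge_one {a b : V3} (ha : a ∈ Hyp) (hb : b ∈ Hyp) : 1 ≤ pscal a b := by
  obtain ⟨ha1, ha0⟩ := ha
  obtain ⟨hb1, hb0⟩ := hb
  simp only [pscal] at ha1 hb1 ⊢
  nlinarith [sq_nonneg (a 1 - b 1), sq_nonneg (a 2 - b 2), sq_nonneg (a 1 * b 2 - a 2 * b 1),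
    mul_pos ha0 hb0, sq_nonneg (a 0 * b 0 - 1 - a 1 * b 1 - a 2 * b 2),
    sq_nonneg (a 0 - b 0), sq_nonneg (a 0 + b 0)]

lemma pscal_eq_one {a b : V3} (ha : a ∈ Hyp) (hb : b ∈ Hyp) (h : pscal a b = 1) : a = b := by
  obtain ⟨ha1, ha0⟩ := ha
  obtain ⟨hb1, hb0⟩ := hb
  simp only [pscal] at ha1 hb1 h
  have hD : (a 1 - b 1)^2 + (a 2 - b 2)^2 + (a 1 * b 2 - a 2 * b 1)^2 = 0 := by
    nlinarith [mul_pos ha0 hb0]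
  have h1 : a 1 = b 1 := by
    nlinarith [sq_nonneg (a 1 - b 1), sq_nonneg (a 2 - b 2), sq_nonneg (a 1 * b 2 - a 2 * b 1)]
  have h2 : a 2 = b 2 := by
    nlinarith [sq_nonneg (a 1 - b 1), sq_nonneg (a 2 - b 2), sq_nonneg (a 1 * b 2 - a 2 * b 1)]
  have h0 : a 0 = b 0 := by nlinarith [sq_nonneg (a 0 - b 0), sq_nonneg (a 0 + b 0)]
  funext i; fin_cases i <;> assumption

lemma cosh_arcoshR {t : ℝ} (ht : 1 ≤ t) : Real.cosh (arcoshR t) = t := by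
  have h1 : (0:ℝ) ≤ t ^ 2 - 1 := by nlinarith
  have hs : Real.sqrt (t ^ 2 - 1) ^ 2 = t ^ 2 - 1 := Real.sq_sqrt h1
  have hsn : 0 ≤ Real.sqrt (t ^ 2 - 1) := Real.sqrt_nonneg _
  have hu : 0 < t + Real.sqrt (t ^ 2 - 1) := by nlinarith
  have hinv : (t + Real.sqrt (t ^ 2 - 1))⁻¹ = t - Real.sqrt (t ^ 2 - 1) :=
    inv_eq_of_mul_eq_one_right (by nlinarith)
  rw [arcoshR, Real.cosh_log hu, hinv]; ring

lemma arcoshR_nonneg {t : ℝ} (ht : 1 ≤ t) : 0 ≤ arcoshR t :=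
  Real.log_nonneg (by nlinarith [Real.sqrt_nonneg (t ^ 2 - 1)])

lemma SS_nonneg {a b : V3} (ha : a ∈ Hyp) (hb : b ∈ Hyp) : 0 ≤ SS a b :=
  Real.sinh_nonneg_iff.2 (by
    have := arcoshR_nonneg (pscal_ge_one ha hb)
    simp only [dH]; linarith)

lemma SS_sq {a b : V3} (ha : a ∈ Hyp) (hb : b ∈ Hyp) :
    pscal a b = 1 + 2 * SS a b ^ 2 := by
  have h1 := pscal_ge_one ha hb
  have h2 : Real.cosh (dH a b) = pscal a b := cosh_arcoshR h1
  have h3 : Real.cosh (2 * (dH a b / 2))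
      = Real.cosh (dH a b / 2) ^ 2 + Real.sinh (dH a b / 2) ^ 2 := Real.cosh_two_mul _
  have h4 : Real.cosh (dH a b / 2) ^ 2 = Real.sinh (dH a b / 2) ^ 2 + 1 := Real.cosh_sq _
  have h5 : 2 * (dH a b / 2) = dH a b := by ring
  rw [h5, h2, h4] at h3
  simp only [SS]; linarith

lemma SS_pos {a b : V3} (ha : a ∈ Hyp) (hb : b ∈ Hyp) (hne : a ≠ b) : 0 < SS a b := by
  rcases lt_or_eq_of_le (SS_nonneg ha hb) with h | h
  · exact h
  · exfalso
    apply hne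
    apply pscal_eq_one ha hb
    have := SS_sq ha hb
    rw [← h] at this
    simpa using this

lemma cramer_pairing (a b c e v : V3) :
    det3 b c e * pscal v a - det3 a c e * pscal v b + det3 a b e * pscal v c
      - det3 a b c * pscal v e = 0 := by
  simp only [det3, pscal]; ring


/-- Lemma 3.7 (Perron): for an oriented-convex cocyclic 4-gon `a b c e` both diagonal
relations hold. -/
theorem perron_diagonal_relations (a b c e : V3)
    (ha : a ∈ Hyp) (hb : b ∈ Hyp) (hc : c ∈ Hyp) (he : e ∈ Hyp)
    (hconv : OrientedConvex 4
      (fun k => if k = 1 then a else if k = 2 then b else if k = 3 then c else e))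
    (hcyc : Cocyc {a, b, c, e}) :
    (SS a b * SS b c + SS a e * SS c e) * SS a c ^ 2 =
      (SS a b * SS c e + SS a e * SS b c) * (SS a b * SS a e + SS b c * SS c e) ∧
    (SS a b * SS a e + SS b c * SS c e) * SS b e ^ 2 =
      (SS a b * SS c e + SS b c * SS a e) * (SS a b * SS b c + SS a e * SS c e) := by
  -- determinants and their positivity from convexity
  have hαp : 0 < det3 b c e := by
    have := hconv 2 (by norm_num) 4 (by norm_num) (by norm_num) (by norm_num [nxt])
    norm_num [nxt] at this
    exact this
  have hδp : 0 < det3 a b c := by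
    have := hconv 1 (by norm_num) 3 (by norm_num) (by norm_num) (by norm_num [nxt])
    norm_num [nxt] at this
    exact this
  have hβp : 0 < det3 a c e := by
    have := hconv 3 (by norm_num) 1 (by norm_num) (by norm_num) (by norm_num [nxt])
    norm_num [nxt] at this
    have heq : det3 a c e = det3 c e a := by simp only [det3]; ring
    rwa [heq]
  have hγp : 0 < det3 a b e := by
    have := hconv 4 (by norm_num) 2 (by norm_num) (by norm_num) (by norm_num [nxt])
    norm_num [nxt] at this
    have heq : det3 a b e = det3 e a b := by simp only [det3]; ring
    rwa [heq]
  set α := det3 b c e with hα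
  set β := det3 a c e with hβ
  set γ := det3 a b e with hγ
  set δ := det3 a b c with hδ
  -- distinctness of vertices
  have hab : a ≠ b := by
    rintro rfl
    have : det3 a a c = 0 := by simp only [det3]; ring
    rw [hδ, this] at hδp; exact lt_irrefl 0 hδp
  have hbc : b ≠ c := by
    rintro rfl
    have : det3 a b b = 0 := by simp only [det3]; ring
    rw [hδ, this] at hδp; exact lt_irrefl 0 hδp
  have hac : a ≠ c := by
    rintro rfl
    have : det3 a b a = 0 := by simp only [det3]; ring
    rw [hδ, this] at hδp; exact lt_irrefl 0 hδp
  have hae : a ≠ e := by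
    rintro rfl
    have : det3 a b a = 0 := by simp only [det3]; ring
    rw [hγ, this] at hγp; exact lt_irrefl 0 hγp
  have hbe : b ≠ e := by
    rintro rfl
    have : det3 a b b = 0 := by simp only [det3]; ring
    rw [hγ, this] at hγp; exact lt_irrefl 0 hγp
  have hce : c ≠ e := by
    rintro rfl
    have : det3 b c c = 0 := by simp only [det3]; ring
    rw [hα, this] at hαp; exact lt_irrefl 0 hαp
  -- the six S-values, positive
  set x := SS a b with hxd
  set y := SS b c with hyd
  set z := SS c e with hzd
  set w := SS a e with hwd
  set pp := SS a c with hpd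
  set qq := SS b e with hqd
  clear_value x y z w pp qq
  have hx : 0 < x := by rw [hxd]; exact SS_pos ha hb hab
  have hy : 0 < y := by rw [hyd]; exact SS_pos hb hc hbc
  have hz : 0 < z := by rw [hzd]; exact SS_pos hc he hce
  have hw : 0 < w := by rw [hwd]; exact SS_pos ha he hae
  have hp : 0 < pp := by rw [hpd]; exact SS_pos ha hc hac
  have hq : 0 < qq := by rw [hqd]; exact SS_pos hb he hbe
  -- Gram entries
  have haa : pscal a a = 1 := ha.1
  have hbb : pscal b b = 1 := hb.1
  have hcc : pscal c c = 1 := hc.1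
  have hee : pscal e e = 1 := he.1
  have gab : pscal a b = 1 + 2 * x ^ 2 := by rw [hxd]; exact SS_sq ha hb
  have gbc : pscal b c = 1 + 2 * y ^ 2 := by rw [hyd]; exact SS_sq hb hc
  have gce : pscal c e = 1 + 2 * z ^ 2 := by rw [hzd]; exact SS_sq hc he
  have gae : pscal a e = 1 + 2 * w ^ 2 := by rw [hwd]; exact SS_sq ha he
  have gac : pscal a c = 1 + 2 * pp ^ 2 := by rw [hpd]; exact SS_sq ha hc
  have gbe : pscal b e = 1 + 2 * qq ^ 2 := by rw [hqd]; exact SS_sq hb he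
  -- cocyclicity ⇒ alternating sum of determinants vanishes
  obtain ⟨u, pr, hu0, hpr, hmem⟩ := hcyc
  have hua : pscal u a = pr := hmem a (by simp)
  have hub : pscal u b = pr := hmem b (by simp)
  have huc : pscal u c = pr := hmem c (by simp)
  have hue : pscal u e = pr := hmem e (by simp)
  have hSum : α - β + γ - δ = 0 := by
    have h := cramer_pairing a b c e u
    rw [hua, hub, huc, hue] at h
    have h2 : (α - β + γ - δ) * pr = 0 := by linear_combination h
    exact (mul_eq_zero.1 h2).resolve_right hpr
  -- pairings with the four vertices
  have h₁ := cramer_pairing a b c e a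
  rw [haa, gab, gac, gae] at h₁
  have h₂ := cramer_pairing a b c e b
  rw [pscal_comm b a] at h₂
  rw [gab, hbb, gbc, gbe] at h₂
  have h₃ := cramer_pairing a b c e c
  rw [pscal_comm c a, pscal_comm c b] at h₃
  rw [gac, gbc, hcc, gce] at h₃
  have h₄ := cramer_pairing a b c e e
  rw [pscal_comm e a, pscal_comm e b, pscal_comm e c] at h₄
  rw [gae, gbe, gce, hee] at h₄
  have hA : γ * pp ^ 2 = β * x ^ 2 + δ * w ^ 2 := by linear_combination (h₁ - hSum) / 2
  have hB : δ * qq ^ 2 = α * x ^ 2 + γ * y ^ 2 := by linear_combination (hSum - h₂) / 2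
  have hC : α * pp ^ 2 = β * y ^ 2 + δ * z ^ 2 := by linear_combination (h₃ - hSum) / 2
  have hE : β * qq ^ 2 = α * w ^ 2 + γ * z ^ 2 := by linear_combination (hSum - h₄) / 2
  -- elimination
  have h0a : α * β * x ^ 2 = γ * δ * z ^ 2 := by
    linear_combination (γ * hC - α * hA + δ * hE - β * hB) / 2
  have h0b : α * δ * w ^ 2 = β * γ * y ^ 2 := by
    linear_combination (γ * hC - α * hA + β * hB - δ * hE) / 2
  have key1 : β * ((α * (x * w) - γ * (y * z)) * (α * (x * w) + γ * (y * z))) = 0 := by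
    linear_combination (α * w ^ 2) * h0a + (γ * z ^ 2) * h0b
  have h1 : α * (x * w) = γ * (y * z) := by
    have h1' := (mul_eq_zero.1 key1).resolve_left (ne_of_gt hβp)
    have hsum : 0 < α * (x * w) + γ * (y * z) := by positivity
    have := (mul_eq_zero.1 h1').resolve_right (ne_of_gt hsum)
    linarith
  have key2 : α * ((β * (x * y) - δ * (w * z)) * (β * (x * y) + δ * (w * z))) = 0 := by
    linear_combination (β * y ^ 2) * h0a - (δ * z ^ 2) * h0b
  have h2 : β * (x * y) = δ * (w * z) := by
    have h2' := (mul_eq_zero.1 key2).resolve_left (ne_of_gt hαp)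
    have hsum : 0 < β * (x * y) + δ * (w * z) := by positivity
    have := (mul_eq_zero.1 h2').resolve_right (ne_of_gt hsum)
    linarith
  -- normalize
  have hxw : (0:ℝ) < x * w := by positivity
  have hxy : (0:ℝ) < x * y := by positivity
  set t := γ / (x * w) with htd
  set s := δ / (x * y) with hsd
  clear_value t s
  have ht : 0 < t := by rw [htd]; exact div_pos hγp hxw
  have hs : 0 < s := by rw [hsd]; exact div_pos hδp hxy
  have eγ : γ = t * (x * w) := by rw [htd]; exact (div_mul_cancel₀ γ (ne_of_gt hxw)).symm
  have eδ : δ = s * (x * y) := by rw [hsd]; exact (div_mul_cancel₀ δ (ne_of_gt hxy)).symm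
  have eα : α = t * (y * z) := by
    apply mul_right_cancel₀ (ne_of_gt hxw)
    linear_combination h1 + (y * z) * eγ
  have eβ : β = s * (w * z) := by
    apply mul_right_cancel₀ (ne_of_gt hxy)
    linear_combination h2 + (w * z) * eδ
  have hSp : t * (y * z + x * w) = s * (w * z + x * y) := by
    linear_combination hSum - eα - eγ + eβ + eδ
  have hP : t * pp ^ 2 = s * (x * z + y * w) := by
    apply mul_left_cancel₀ (ne_of_gt hxw)
    linear_combination hA - pp ^ 2 * eγ + x ^ 2 * eβ + w ^ 2 * eδ
  have hQ : s * qq ^ 2 = t * (x * z + w * y) := by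
    apply mul_left_cancel₀ (ne_of_gt hxy)
    linear_combination hB - qq ^ 2 * eδ + x ^ 2 * eα + y ^ 2 * eγ
  constructor
  · apply mul_left_cancel₀ (ne_of_gt ht)
    linear_combination (x * y + w * z) * hP - (x * z + w * y) * hSp
  · apply mul_left_cancel₀ (ne_of_gt hs)
    linear_combination (x * w + y * z) * hQ + (x * z + y * w) * hSp
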